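/- Let a_1, a_2, a_3, b be real numbers with 0 ≤ a_1 ≤ a_2 ≤ a_3 < 1 and b ≥ 0. If a_2 − a_1 ≥ 0.7698 and b ≥ 0.2308, then E_5(a_1, a_2, a_3, b) < 0. -/
import Mathlib
set_option maxHeartbeats 2000000
set_option maxRecDepth 10000

/-- The Donaldson–Futaki polynomial `E₅` for polarizations of `𝔽₁`-type on a smooth
del Pezzo surface of degree `5` (so `m = 3`). -/
noncomputable def E5 (a1 a2 a3 b : ℝ) : ℝ :=
  (5 + 2 * b + a1 + a2 + a3) *
      (-(2 + a1 + b) ^ 3 - 3 * (1 - a1) * (2 + a1 + b) ^ 2 + (1 + b) ^ 3 +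
        (1 - a2) ^ 3 + (1 - a3) ^ 3) +
    3 * ((2 + a1 + b) ^ 2 + (1 - a1) * (2 + a1 + b)) *
      (5 + 4 * b + 2 * (a1 + a2 + a3) - (a1 ^ 2 + a2 ^ 2 + a3 ^ 2))

private lemma E5_key (x g h c : ℝ) (hx : 0 ≤ x) (hg : 0 ≤ g) (hh : 0 ≤ h) (hc : 0 ≤ c) :
    E5 x (x + 0.7698 + g) (x + 0.7698 + g + h) (0.2308 + c) < 0 := by
  have hE : E5 x (x + 0.7698 + g) (x + 0.7698 + g + h) (0.2308 + c)
      = -(116420887421/156250000000000 : ℝ) - ((1840074848931/62500000000 : ℝ) * (x) + (4031532611/31250000000 : ℝ) * (c) + (526785303/12500000 : ℝ) * (x^2) + (383044161/12500000 : ℝ) * (x * c) + (6944403/12500000 : ℝ) * (c^2) + (68103/2500 : ℝ) * (x^2 * c) + (95627240441/3125000000 : ℝ) * (g) + (1082271351/12500000 : ℝ) * (x * g) + (106904559/3125000 : ℝ) * (g^2) + (38964/625 : ℝ) * (x^2 * g) + (129309/2500 : ℝ) * (x * g^2) + (281/25 : ℝ) * (g^3) + (95627240441/6250000000 : ℝ)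 * (h) + (1082271351/25000000 : ℝ) * (x * h) + (106904559/3125000 : ℝ) * (g * h) + (423643833/25000000 : ℝ) * (h^2) + (19482/625 : ℝ) * (x^2 * h) + (129309/2500 : ℝ) * (x * g * h) + (27243/1000 : ℝ) * (x * h^2) + (843/50 : ℝ) * (g^2 * h) + (45603/2500 : ℝ) * (g * h^2) + (31553/5000 : ℝ) * (h^3) + (11547/1250 : ℝ) * (x * c^2) + (3 : ℝ) * (x^2 * c^2) + (206799879/6250000 : ℝ) * (g * c) + (17313/250 : ℝ) * (x * g * c) + (37509/1250 : ℝ) * (g^2 * c) + (18 : ℝ) * (x^2 * g * c) + (18 : ℝ) * (x * g^2 * c) + (4 : ℝ) * (g^3 * c) + (206799879/12500000 : ℝ) * (h * c) + (17313/500 : ℝ) * (x * h * c) + (37509/1250 : ℝ) * (g * h * c) + (37509/2500 : ℝ) * (h^2 * c) + (9 : ℝ) * (x^2 * h * c) + (18 : ℝ) * (x * g * h * c) + (9 : ℝ) * (x * h^2 * c) + (6 : ℝ) * (g^2 * h * c) + (6 : ℝ) * (g * h^2 * c) + (2 : ℝ) * (h^3 * c) + (34641/2500 : ℝ) * (x^3)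 + (18 : ℝ) * (x^3 * g) + (30 : ℝ) * (x^2 * g^2) + (18 : ℝ) * (x * g^3) + (9 : ℝ) * (x^3 * h) + (30 : ℝ) * (x^2 * g * h) + (12 : ℝ) * (x^2 * h^2) + (27 : ℝ) * (x * g^2 * h) + (21 : ℝ) * (x * g * h^2) + (6 : ℝ) * (x * h^3) + (11547/1250 : ℝ) * (g * c^2) + (4 : ℝ) * (g^4) + (8 : ℝ) * (g^3 * h) + (9 : ℝ) * (g^2 * h^2) + (5 : ℝ) * (g * h^3) + (11547/2500 : ℝ) * (h * c^2) + (1 : ℝ) * (h^4) + (12 : ℝ) * (x * g * c^2) + (6 : ℝ) * (g^2 * c^2) + (6 : ℝ) * (x * h * c^2) + (6 : ℝ) * (g * h * c^2) + (3 : ℝ) * (h^2 * c^2)) := by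
    unfold E5; norm_num; ring
  have t0 : (0:ℝ) ≤ (1840074848931/62500000000 : ℝ) * (x) := mul_nonneg (by norm_num) hx
  have t1 : (0:ℝ) ≤ (4031532611/31250000000 : ℝ) * (c) := mul_nonneg (by norm_num) hc
  have t2 : (0:ℝ) ≤ (526785303/12500000 : ℝ) * (x^2) := mul_nonneg (by norm_num) (pow_nonneg hx 2)
  have t3 : (0:ℝ) ≤ (383044161/12500000 : ℝ) * (x * c) := mul_nonneg (by norm_num) (mul_nonneg hx hc)
  have t4 : (0:ℝ) ≤ (6944403/12500000 : ℝ) * (c^2) := mul_nonneg (by norm_num) (pow_nonneg hc 2)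
  have t5 : (0:ℝ) ≤ (68103/2500 : ℝ) * (x^2 * c) := mul_nonneg (by norm_num) (mul_nonneg (pow_nonneg hx 2) hc)
  have t6 : (0:ℝ) ≤ (95627240441/3125000000 : ℝ) * (g) := mul_nonneg (by norm_num) hg
  have t7 : (0:ℝ) ≤ (1082271351/12500000 : ℝ) * (x * g) := mul_nonneg (by norm_num) (mul_nonneg hx hg)
  have t8 : (0:ℝ) ≤ (106904559/3125000 : ℝ) * (g^2) := mul_nonneg (by norm_num) (pow_nonneg hg 2)
  have t9 : (0:ℝ) ≤ (38964/625 : ℝ) * (x^2 * g) := mul_nonneg (by norm_num) (mul_nonneg (pow_nonneg hx 2) hg)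
  have t10 : (0:ℝ) ≤ (129309/2500 : ℝ) * (x * g^2) := mul_nonneg (by norm_num) (mul_nonneg hx (pow_nonneg hg 2))
  have t11 : (0:ℝ) ≤ (281/25 : ℝ) * (g^3) := mul_nonneg (by norm_num) (pow_nonneg hg 3)
  have t12 : (0:ℝ) ≤ (95627240441/6250000000 : ℝ) * (h) := mul_nonneg (by norm_num) hh
  have t13 : (0:ℝ) ≤ (1082271351/25000000 : ℝ) * (x * h) := mul_nonneg (by norm_num) (mul_nonneg hx hh)
  have t14 : (0:ℝ) ≤ (106904559/3125000 : ℝ) * (g * h) := mul_nonneg (by norm_num) (mul_nonneg hg hh)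
  have t15 : (0:ℝ) ≤ (423643833/25000000 : ℝ) * (h^2) := mul_nonneg (by norm_num) (pow_nonneg hh 2)
  have t16 : (0:ℝ) ≤ (19482/625 : ℝ) * (x^2 * h) := mul_nonneg (by norm_num) (mul_nonneg (pow_nonneg hx 2) hh)
  have t17 : (0:ℝ) ≤ (129309/2500 : ℝ) * (x * g * h) := mul_nonneg (by norm_num) (mul_nonneg (mul_nonneg hx hg) hh)
  have t18 : (0:ℝ) ≤ (27243/1000 : ℝ) * (x * h^2) := mul_nonneg (by norm_num) (mul_nonneg hx (pow_nonneg hh 2))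
  have t19 : (0:ℝ) ≤ (843/50 : ℝ) * (g^2 * h) := mul_nonneg (by norm_num) (mul_nonneg (pow_nonneg hg 2) hh)
  have t20 : (0:ℝ) ≤ (45603/2500 : ℝ) * (g * h^2) := mul_nonneg (by norm_num) (mul_nonneg hg (pow_nonneg hh 2))
  have t21 : (0:ℝ) ≤ (31553/5000 : ℝ) * (h^3) := mul_nonneg (by norm_num) (pow_nonneg hh 3)
  have t22 : (0:ℝ) ≤ (11547/1250 : ℝ) * (x * c^2) := mul_nonneg (by norm_num) (mul_nonneg hx (pow_nonneg hc 2))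
  have t23 : (0:ℝ) ≤ (3 : ℝ) * (x^2 * c^2) := mul_nonneg (by norm_num) (mul_nonneg (pow_nonneg hx 2) (pow_nonneg hc 2))
  have t24 : (0:ℝ) ≤ (206799879/6250000 : ℝ) * (g * c) := mul_nonneg (by norm_num) (mul_nonneg hg hc)
  have t25 : (0:ℝ) ≤ (17313/250 : ℝ) * (x * g * c) := mul_nonneg (by norm_num) (mul_nonneg (mul_nonneg hx hg) hc)
  have t26 : (0:ℝ) ≤ (37509/1250 : ℝ) * (g^2 * c) := mul_nonneg (by norm_num) (mul_nonneg (pow_nonneg hg 2) hc)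
  have t27 : (0:ℝ) ≤ (18 : ℝ) * (x^2 * g * c) := mul_nonneg (by norm_num) (mul_nonneg (mul_nonneg (pow_nonneg hx 2) hg) hc)
  have t28 : (0:ℝ) ≤ (18 : ℝ) * (x * g^2 * c) := mul_nonneg (by norm_num) (mul_nonneg (mul_nonneg hx (pow_nonneg hg 2)) hc)
  have t29 : (0:ℝ) ≤ (4 : ℝ) * (g^3 * c) := mul_nonneg (by norm_num) (mul_nonneg (pow_nonneg hg 3) hc)
  have t30 : (0:ℝ) ≤ (206799879/12500000 : ℝ) * (h * c) := mul_nonneg (by norm_num) (mul_nonneg hh hc)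
  have t31 : (0:ℝ) ≤ (17313/500 : ℝ) * (x * h * c) := mul_nonneg (by norm_num) (mul_nonneg (mul_nonneg hx hh) hc)
  have t32 : (0:ℝ) ≤ (37509/1250 : ℝ) * (g * h * c) := mul_nonneg (by norm_num) (mul_nonneg (mul_nonneg hg hh) hc)
  have t33 : (0:ℝ) ≤ (37509/2500 : ℝ) * (h^2 * c) := mul_nonneg (by norm_num) (mul_nonneg (pow_nonneg hh 2) hc)
  have t34 : (0:ℝ) ≤ (9 : ℝ) * (x^2 * h * c) := mul_nonneg (by norm_num) (mul_nonneg (mul_nonneg (pow_nonneg hx 2) hh) hc)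
  have t35 : (0:ℝ) ≤ (18 : ℝ) * (x * g * h * c) := mul_nonneg (by norm_num) (mul_nonneg (mul_nonneg (mul_nonneg hx hg) hh) hc)
  have t36 : (0:ℝ) ≤ (9 : ℝ) * (x * h^2 * c) := mul_nonneg (by norm_num) (mul_nonneg (mul_nonneg hx (pow_nonneg hh 2)) hc)
  have t37 : (0:ℝ) ≤ (6 : ℝ) * (g^2 * h * c) := mul_nonneg (by norm_num) (mul_nonneg (mul_nonneg (pow_nonneg hg 2) hh) hc)
  have t38 : (0:ℝ) ≤ (6 : ℝ) * (g * h^2 * c) := mul_nonneg (by norm_num) (mul_nonneg (mul_nonneg hg (pow_nonneg hh 2)) hc)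
  have t39 : (0:ℝ) ≤ (2 : ℝ) * (h^3 * c) := mul_nonneg (by norm_num) (mul_nonneg (pow_nonneg hh 3) hc)
  have t40 : (0:ℝ) ≤ (34641/2500 : ℝ) * (x^3) := mul_nonneg (by norm_num) (pow_nonneg hx 3)
  have t41 : (0:ℝ) ≤ (18 : ℝ) * (x^3 * g) := mul_nonneg (by norm_num) (mul_nonneg (pow_nonneg hx 3) hg)
  have t42 : (0:ℝ) ≤ (30 : ℝ) * (x^2 * g^2) := mul_nonneg (by norm_num) (mul_nonneg (pow_nonneg hx 2) (pow_nonneg hg 2))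
  have t43 : (0:ℝ) ≤ (18 : ℝ) * (x * g^3) := mul_nonneg (by norm_num) (mul_nonneg hx (pow_nonneg hg 3))
  have t44 : (0:ℝ) ≤ (9 : ℝ) * (x^3 * h) := mul_nonneg (by norm_num) (mul_nonneg (pow_nonneg hx 3) hh)
  have t45 : (0:ℝ) ≤ (30 : ℝ) * (x^2 * g * h) := mul_nonneg (by norm_num) (mul_nonneg (mul_nonneg (pow_nonneg hx 2) hg) hh)
  have t46 : (0:ℝ) ≤ (12 : ℝ) * (x^2 * h^2) := mul_nonneg (by norm_num) (mul_nonneg (pow_nonneg hx 2) (pow_nonneg hh 2))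
  have t47 : (0:ℝ) ≤ (27 : ℝ) * (x * g^2 * h) := mul_nonneg (by norm_num) (mul_nonneg (mul_nonneg hx (pow_nonneg hg 2)) hh)
  have t48 : (0:ℝ) ≤ (21 : ℝ) * (x * g * h^2) := mul_nonneg (by norm_num) (mul_nonneg (mul_nonneg hx hg) (pow_nonneg hh 2))
  have t49 : (0:ℝ) ≤ (6 : ℝ) * (x * h^3) := mul_nonneg (by norm_num) (mul_nonneg hx (pow_nonneg hh 3))
  have t50 : (0:ℝ) ≤ (11547/1250 : ℝ) * (g * c^2) := mul_nonneg (by norm_num) (mul_nonneg hg (pow_nonneg hc 2))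
  have t51 : (0:ℝ) ≤ (4 : ℝ) * (g^4) := mul_nonneg (by norm_num) (pow_nonneg hg 4)
  have t52 : (0:ℝ) ≤ (8 : ℝ) * (g^3 * h) := mul_nonneg (by norm_num) (mul_nonneg (pow_nonneg hg 3) hh)
  have t53 : (0:ℝ) ≤ (9 : ℝ) * (g^2 * h^2) := mul_nonneg (by norm_num) (mul_nonneg (pow_nonneg hg 2) (pow_nonneg hh 2))
  have t54 : (0:ℝ) ≤ (5 : ℝ) * (g * h^3) := mul_nonneg (by norm_num) (mul_nonneg hg (pow_nonneg hh 3))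
  have t55 : (0:ℝ) ≤ (11547/2500 : ℝ) * (h * c^2) := mul_nonneg (by norm_num) (mul_nonneg hh (pow_nonneg hc 2))
  have t56 : (0:ℝ) ≤ (1 : ℝ) * (h^4) := mul_nonneg (by norm_num) (pow_nonneg hh 4)
  have t57 : (0:ℝ) ≤ (12 : ℝ) * (x * g * c^2) := mul_nonneg (by norm_num) (mul_nonneg (mul_nonneg hx hg) (pow_nonneg hc 2))
  have t58 : (0:ℝ) ≤ (6 : ℝ) * (g^2 * c^2) := mul_nonneg (by norm_num) (mul_nonneg (pow_nonneg hg 2) (pow_nonneg hc 2))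
  have t59 : (0:ℝ) ≤ (6 : ℝ) * (x * h * c^2) := mul_nonneg (by norm_num) (mul_nonneg (mul_nonneg hx hh) (pow_nonneg hc 2))
  have t60 : (0:ℝ) ≤ (6 : ℝ) * (g * h * c^2) := mul_nonneg (by norm_num) (mul_nonneg (mul_nonneg hg hh) (pow_nonneg hc 2))
  have t61 : (0:ℝ) ≤ (3 : ℝ) * (h^2 * c^2) := mul_nonneg (by norm_num) (mul_nonneg (pow_nonneg hh 2) (pow_nonneg hc 2))
  rw [hE]
  linarith

theorem E5_negative (a1 a2 a3 b : ℝ)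
    (h0 : 0 ≤ a1) (h12 : a1 ≤ a2) (h23 : a2 ≤ a3) (h3 : a3 < 1) (hb : 0 ≤ b)
    (hgap : a2 - a1 ≥ 0.7698) (hb2 : b ≥ 0.2308) :
    E5 a1 a2 a3 b < 0 := by
  have key := E5_key a1 (a2 - a1 - 0.7698) (a3 - a2) (b - 0.2308)
    h0 (by linarith) (by linarith) (by linarith)
  have e2 : a1 + 0.7698 + (a2 - a1 - 0.7698) = a2 := by ring
  have e3 : a1 + 0.7698 + (a2 - a1 - 0.7698) + (a3 - a2) = a3 := by ring
  have e4 : (0.2308 : ℝ) + (b - 0.2308) = b := by ring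
  rw [e3, e2, e4] at key
  exact key
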